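/- arXiv:1305.0363 — 5 statements merged into one kernel-verified Lean document; each statement's English description precedes it below -/
import Mathlib

section
/- Let G and H be connected graphs of orders n1 ≥ 2 and n2, respectively. Then dim(G ⊠ H) ≤ n1·dim(H) + n2·dim(G) − dim(G)·dim(H). -/
/-!
Distances in `G ⊠ H` are the maxima of the coordinate distances. Hence if `A` resolves `G` and
`B` resolves `H`, then `A × V(H) ∪ V(G) × B` resolves `G ⊠ H`: two vertices `(x₁, x₂)`, `(x₁, y₂)`
are separated by `(x₁, b)` for any `b ∈ B` separating `x₂` and `y₂`; if instead `x₁ ≠ y₁`, with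
`d(x₁, a) < d(y₁, a)` for some `a ∈ A`, then `(a, x₂)` is at distance `d(x₁, a)` from `(x₁, x₂)`
but at least `d(y₁, a)` from `(y₁, y₂)`. Inclusion–exclusion counts `n₁ |B| + n₂ |A| - |A| |B|`
vertices in this set.
-/

open SimpleGraph

/-- The strong product of two simple graphs. -/
def strongProd {α β : Type*} (G : SimpleGraph α) (H : SimpleGraph β) :
    SimpleGraph (α × β) where
  Adj x y := x ≠ y ∧ (x.1 = y.1 ∨ G.Adj x.1 y.1) ∧ (x.2 = y.2 ∨ H.Adj x.2 y.2)
  symm := by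
    constructor
    rintro ⟨a, b⟩ ⟨c, d⟩ ⟨hne, h1, h2⟩
    refine ⟨hne.symm, ?_, ?_⟩
    · rcases h1 with h | h
      · exact Or.inl h.symm
      · exact Or.inr h.symm
    · rcases h2 with h | h
      · exact Or.inl h.symm
      · exact Or.inr h.symm
  loopless := by constructor; rintro ⟨a, b⟩ ⟨hne, -, -⟩; exact hne rfl

/-- A set `S` is a metric generator for `G` if every pair of distinct vertices is
distinguished by some element of `S`. -/
def IsMetricGen {α : Type*} (G : SimpleGraph α) (S : Set α) : Prop :=
  ∀ x y : α, x ≠ y → ∃ s ∈ S, G.dist x s ≠ G.dist y s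

/-- The metric dimension of a graph: minimum cardinality of a metric generator. -/
noncomputable def metricDim {α : Type*} (G : SimpleGraph α) : ℕ :=
  sInf {n | ∃ S : Set α, IsMetricGen G S ∧ S.ncard = n}

/-- `G` is self `k`-resolved if for all distinct `x, y` there is `w` such that
`d(y,w) ≥ k` and `x` lies on a shortest `y`–`w` path, or symmetrically. -/
def SelfResolved {α : Type*} (G : SimpleGraph α) (k : ℕ) : Prop :=
  ∀ x y : α, x ≠ y → ∃ w : α,
    (k ≤ G.dist y w ∧ G.dist y x + G.dist x w = G.dist y w) ∨
    (k ≤ G.dist x w ∧ G.dist x y + G.dist y w = G.dist x w)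

/-- Two vertices are true twins if their closed neighborhoods coincide. -/
def TrueTwins {α : Type*} (G : SimpleGraph α) (u v : α) : Prop :=
  insert u (G.neighborSet u) = insert v (G.neighborSet v)

/-- The number of equivalence classes of the true twin relation. -/
noncomputable def numTrueTwinClasses {α : Type*} (G : SimpleGraph α) : ℕ :=
  Nat.card (Quotient (Setoid.ker (fun v => insert v (G.neighborSet v))))

open Set

namespace SimpleGraph

variable {V W : Type*} {G : SimpleGraph V} {G' : SimpleGraph W}

theorem Walk.exists_length_le_of_adj_imp (f : V → W)
    (hf : ∀ ⦃x y⦄, G.Adj x y → f x = f y ∨ G'.Adj (f x) (f y)) {u v : V} (p : G.Walk u v) :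
    ∃ q : G'.Walk (f u) (f v), q.length ≤ p.length := by
  induction p with
  | nil => exact ⟨nil, le_rfl⟩
  | cons h p ih =>
    obtain ⟨q, hq⟩ := ih
    rcases hf h with heq | hadj
    · exact ⟨q.copy heq.symm rfl, by simp only [length_copy, length_cons]; omega⟩
    · exact ⟨cons hadj q, by simpa using hq⟩

theorem Reachable.dist_le_dist_of_adj_imp {u v : V} (h : G.Reachable u v) (f : V → W)
    (hf : ∀ ⦃x y⦄, G.Adj x y → f x = f y ∨ G'.Adj (f x) (f y)) :
    G'.dist (f u) (f v) ≤ G.dist u v := by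
  obtain ⟨p, hp⟩ := h.exists_walk_length_eq_dist
  obtain ⟨q, hq⟩ := p.exists_length_le_of_adj_imp f hf
  exact (dist_le q).trans (hp ▸ hq)

end SimpleGraph

section StrongProduct

variable {α β : Type*} {G : SimpleGraph α} {H : SimpleGraph β}

theorem strongProd_adj {x y : α × β} :
    (strongProd G H).Adj x y ↔
      x ≠ y ∧ (x.1 = y.1 ∨ G.Adj x.1 y.1) ∧ (x.2 = y.2 ∨ H.Adj x.2 y.2) :=
  Iff.rfl

theorem exists_strongProd_walk_length_eq_max {a c : α} {b d : β}
    (p : G.Walk a c) (q : H.Walk b d) :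
    ∃ w : (strongProd G H).Walk (a, b) (c, d), w.length = max p.length q.length := by
  induction p generalizing b with
  | nil =>
    induction q with
    | nil => exact ⟨Walk.nil, rfl⟩
    | cons h q ih =>
      obtain ⟨w, hw⟩ := ih
      refine ⟨Walk.cons ?_ w, ?_⟩
      · exact strongProd_adj.2 ⟨by simp [h.ne], Or.inl rfl, Or.inr h⟩
      · simp [hw]
  | cons h p ih =>
    cases q with
    | nil =>
      obtain ⟨w, hw⟩ := ih Walk.nil
      refine ⟨Walk.cons ?_ w, ?_⟩
      · exact strongProd_adj.2 ⟨by simp [h.ne], Or.inr h, Or.inl rfl⟩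
      · simp [hw]
    | cons h' q =>
      obtain ⟨w, hw⟩ := ih q
      refine ⟨Walk.cons ?_ w, ?_⟩
      · exact strongProd_adj.2 ⟨by simp [h.ne], Or.inr h, Or.inr h'⟩
      · simp [hw, Nat.succ_max_succ]

theorem strongProd_connected (hG : G.Connected) (hH : H.Connected) :
    (strongProd G H).Connected := by
  obtain ⟨a₀⟩ := hG.nonempty
  obtain ⟨b₀⟩ := hH.nonempty
  refine (connected_iff_exists_forall_reachable _).2 ⟨(a₀, b₀), fun ⟨a, b⟩ ↦ ?_⟩
  exact ⟨(exists_strongProd_walk_length_eq_max (hG a₀ a).some (hH b₀ b).some).choose⟩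

theorem dist_strongProd (hG : G.Connected) (hH : H.Connected) (a c : α) (b d : β) :
    (strongProd G H).dist (a, b) (c, d) = max (G.dist a c) (H.dist b d) := by
  apply le_antisymm
  · obtain ⟨p, hp⟩ := hG.exists_walk_length_eq_dist a c
    obtain ⟨q, hq⟩ := hH.exists_walk_length_eq_dist b d
    obtain ⟨w, hw⟩ := exists_strongProd_walk_length_eq_max p q
    exact hp ▸ hq ▸ hw ▸ dist_le w
  · have hreach := strongProd_connected hG hH (a, b) (c, d)
    exact max_le (hreach.dist_le_dist_of_adj_imp Prod.fst fun _ _ h ↦ h.2.1)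
      (hreach.dist_le_dist_of_adj_imp Prod.snd fun _ _ h ↦ h.2.2)

end StrongProduct

section MetricDimension

variable {α β : Type*} {G : SimpleGraph α} {H : SimpleGraph β}

theorem isMetricGen_univ (hG : G.Connected) : IsMetricGen G univ := by
  intro x y hxy
  refine ⟨x, mem_univ x, ?_⟩
  rw [dist_self, Ne, eq_comm, hG.dist_eq_zero_iff]
  exact hxy.symm

theorem metricDim_le_ncard {S : Set α} (hS : IsMetricGen G S) : metricDim G ≤ S.ncard :=
  Nat.sInf_le ⟨S, hS, rfl⟩

theorem exists_isMetricGen_ncard_eq_metricDim (hG : G.Connected) :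
    ∃ S : Set α, IsMetricGen G S ∧ S.ncard = metricDim G :=
  Nat.sInf_mem (s := {n | ∃ S : Set α, IsMetricGen G S ∧ S.ncard = n})
    ⟨_, univ, isMetricGen_univ hG, rfl⟩

theorem isMetricGen_strongProd (hG : G.Connected) (hH : H.Connected) {A : Set α} {B : Set β}
    (hA : IsMetricGen G A) (hB : IsMetricGen H B) :
    IsMetricGen (strongProd G H) (A ×ˢ univ ∪ univ ×ˢ B) := by
  rintro ⟨x₁, x₂⟩ ⟨y₁, y₂⟩ hxy
  by_cases h₁ : x₁ = y₁
  · subst h₁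
    obtain ⟨b, hb, hne⟩ := hB x₂ y₂ fun h ↦ hxy (by rw [h])
    refine ⟨(x₁, b), Or.inr ⟨mem_univ _, hb⟩, ?_⟩
    simpa [dist_strongProd hG hH] using hne
  · obtain ⟨a, ha, hne⟩ := hA x₁ y₁ h₁
    wlog hlt : G.dist x₁ a < G.dist y₁ a generalizing x₁ x₂ y₁ y₂
    · obtain ⟨s, hs, hne'⟩ := this y₁ y₂ x₁ x₂ hxy.symm (Ne.symm h₁) hne.symm
        (lt_of_le_of_ne (not_lt.1 hlt) hne.symm)
      exact ⟨s, hs, hne'.symm⟩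
    refine ⟨(a, x₂), Or.inl ⟨ha, mem_univ _⟩, ?_⟩
    rw [dist_strongProd hG hH, dist_strongProd hG hH, dist_self, Nat.max_zero]
    exact (hlt.trans_le (le_max_left _ _)).ne

end MetricDimension

theorem ncard_prod_univ_union_univ_prod {α β : Type*} [Finite α] [Finite β]
    (A : Set α) (B : Set β) :
    (A ×ˢ univ ∪ univ ×ˢ B).ncard =
      Nat.card α * B.ncard + Nat.card β * A.ncard - A.ncard * B.ncard := by
  have hinter : A ×ˢ (univ : Set β) ∩ (univ : Set α) ×ˢ B = A ×ˢ B := by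
    ext ⟨a, b⟩; simp
  have hcount := ncard_union_add_ncard_inter (A ×ˢ (univ : Set β)) ((univ : Set α) ×ˢ B)
  rw [hinter, ncard_prod, ncard_prod, ncard_prod, ncard_univ, ncard_univ,
    Nat.mul_comm A.ncard (Nat.card β)] at hcount
  omega

theorem stmt_1_general {α β : Type*} [Fintype α] [Fintype β]
    (G : SimpleGraph α) (H : SimpleGraph β)
    (hG : G.Connected) (hH : H.Connected) :
    metricDim (strongProd G H) ≤
      Fintype.card α * metricDim H + Fintype.card β * metricDim G -
        metricDim G * metricDim H := by
  obtain ⟨A, hA, hAcard⟩ := exists_isMetricGen_ncard_eq_metricDim hG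
  obtain ⟨B, hB, hBcard⟩ := exists_isMetricGen_ncard_eq_metricDim hH
  calc metricDim (strongProd G H) ≤ (A ×ˢ univ ∪ univ ×ˢ B).ncard :=
        metricDim_le_ncard (isMetricGen_strongProd hG hH hA hB)
    _ = _ := by
      rw [ncard_prod_univ_union_univ_prod, hAcard, hBcard, Nat.card_eq_fintype_card,
        Nat.card_eq_fintype_card]

theorem stmt_1 {α β : Type*} [Fintype α] [Fintype β]
    (G : SimpleGraph α) (H : SimpleGraph β)
    (hG : G.Connected) (hH : H.Connected) (h1 : 2 ≤ Fintype.card α) :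
    metricDim (strongProd G H) ≤
      Fintype.card α * metricDim H + Fintype.card β * metricDim G -
        metricDim G * metricDim H :=
  stmt_1_general G H hG hH
end

section
/- A nontrivial connected graph is self 2-resolved if and only if it has no pair of true twin vertices. -/
open SimpleGraph

/-! Distinct true twins are adjacent and equidistant from every other vertex, so neither lies on a
shortest path from the other to a vertex at distance at least 2. Conversely, nonadjacent `x, y`
are resolved by `w = x`, and adjacent non-twins by a vertex adjacent to exactly one of them, which
is at distance 2 from the other. -/

namespace SimpleGraph

variable {α : Type*} {G : SimpleGraph α} {u v w x y : α}

theorem TrueTwins.adj (h : TrueTwins G u v) (huv : u ≠ v) : G.Adj u v := by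
  have hv : v ∈ insert u (G.neighborSet u) := h ▸ Set.mem_insert v _
  exact hv.resolve_left huv.symm

theorem TrueTwins.of_adj (hxy : G.Adj x y)
    (h : ∀ w, w ≠ x → w ≠ y → (G.Adj x w ↔ G.Adj y w)) : TrueTwins G x y := by
  ext w
  simp only [Set.mem_insert_iff, mem_neighborSet]
  by_cases hwx : w = x
  · subst hwx
    simp [hxy.symm]
  by_cases hwy : w = y
  · subst hwy
    simp [hxy]
  simp [hwx, hwy, h w hwx hwy]

/-- A shortest walk from `u` to `w` leaves `u` through a vertex of `N[v] = N[u]`. -/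
theorem TrueTwins.dist_le (h : TrueTwins G u v) (hr : G.Reachable u w) (hwu : w ≠ u) :
    G.dist v w ≤ G.dist u w := by
  obtain ⟨p, hp⟩ := hr.exists_walk_length_eq_dist
  cases p with
  | nil => exact absurd rfl hwu
  | @cons _ z _ huz q =>
    have hz : z ∈ insert v (G.neighborSet v) := h ▸ Set.mem_insert_of_mem u huz
    rw [← hp, Walk.length_cons]
    rcases hz with rfl | hvz
    · exact (SimpleGraph.dist_le q).trans (Nat.le_succ _)
    · exact SimpleGraph.dist_le (Walk.cons hvz q)

theorem TrueTwins.dist_eq (hG : G.Connected) (h : TrueTwins G u v) (hwu : w ≠ u)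
    (hwv : w ≠ v) : G.dist u w = G.dist v w :=
  le_antisymm (TrueTwins.dist_le h.symm (hG v w) hwv) (h.dist_le (hG u w) hwu)

theorem TrueTwins.dist_add_dist_ne (hG : G.Connected) (h : TrueTwins G u v) (huv : u ≠ v)
    (hvw : 2 ≤ G.dist v w) : G.dist v u + G.dist u w ≠ G.dist v w := by
  have hvu : G.dist v u = 1 := dist_eq_one_iff_adj.mpr (h.adj huv).symm
  have hwv : w ≠ v := by rintro rfl; simp at hvw
  have hwu : w ≠ u := by rintro rfl; omega
  rw [hvu, h.dist_eq hG hwu hwv]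
  omega

theorem SelfResolved.eq_of_trueTwins (hG : G.Connected) (hsr : SelfResolved G 2)
    (h : TrueTwins G u v) : u = v := by
  by_contra huv
  obtain ⟨w, ⟨hvw, hu⟩ | ⟨huw, hv⟩⟩ := hsr u v huv
  · exact h.dist_add_dist_ne hG huv hvw hu
  · exact TrueTwins.dist_add_dist_ne hG h.symm (Ne.symm huv) huw hv

theorem dist_eq_two_of_adj_of_adj_of_not_adj (hyx : G.Adj y x) (hxw : G.Adj x w)
    (hyw : ¬G.Adj y w) (hne : y ≠ w) : G.dist y w = 2 := by
  have : G.edist y w = 2 := edist_eq_two_iff.mpr ⟨hne, hyw, x, hyx, hxw.symm⟩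
  simp [dist, this]

theorem Connected.selfResolved_two (hG : G.Connected)
    (h : ∀ u v, TrueTwins G u v → u = v) : SelfResolved G 2 := by
  intro x y hxy
  by_cases hadj : G.Adj x y
  swap
  · exact ⟨x, Or.inl ⟨hG.one_lt_dist_of_ne_of_not_adj (Ne.symm hxy) (fun hyx ↦ hadj hyx.symm),
      by simp⟩⟩
  obtain ⟨w, hwx, hwy, hw⟩ : ∃ w, w ≠ x ∧ w ≠ y ∧ ¬(G.Adj x w ↔ G.Adj y w) := by
    by_contra! hall
    exact hxy (h x y (TrueTwins.of_adj hadj hall))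
  refine ⟨w, ?_⟩
  by_cases hxw : G.Adj x w
  · have hyw : ¬G.Adj y w := fun hyw ↦ hw (iff_of_true hxw hyw)
    have h2 := dist_eq_two_of_adj_of_adj_of_not_adj hadj.symm hxw hyw hwy.symm
    refine Or.inl ⟨h2.ge, ?_⟩
    rw [h2, dist_eq_one_iff_adj.mpr hadj.symm, dist_eq_one_iff_adj.mpr hxw]
  · have hyw : G.Adj y w := by tauto
    have h2 := dist_eq_two_of_adj_of_adj_of_not_adj hadj hyw hxw hwx.symm
    refine Or.inr ⟨h2.ge, ?_⟩
    rw [h2, dist_eq_one_iff_adj.mpr hadj, dist_eq_one_iff_adj.mpr hyw]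

end SimpleGraph

theorem stmt_13_general {α : Type*} (G : SimpleGraph α) (hG : G.Connected) :
    SelfResolved G 2 ↔ ∀ u v : α, TrueTwins G u v → u = v :=
  ⟨fun hsr _ _ ↦ hsr.eq_of_trueTwins hG, hG.selfResolved_two⟩

theorem stmt_13 {α : Type*} [Nontrivial α] (G : SimpleGraph α) (hG : G.Connected) :
    SelfResolved G 2 ↔ ∀ u v : α, TrueTwins G u v → u = v :=
  stmt_13_general G hG
end

section
/- For any n1 ≥ 2 and n2 ≥ 4, dim(K_{n1} ⊠ C_{n2}) = n2·(n1 − 1). -/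
open SimpleGraph

/-!
Every shortest path of `K_m ⊠ H` projects onto a walk of `H` that may pause, so for distinct
vertices `d(x, y) = max 1 (d_H(x.2, y.2))`. In particular the `m` vertices of each fibre
`K_m × {b}` are true twins, so a metric generator contains all but at most one of them, giving
`dim ≥ |H| (m - 1)`. Conversely, removing one fibre `{a₀} × H` leaves a metric generator as soon
as no closed neighbourhood of `H` contains another, which holds for cycles of length at least 4:
two vertices in a common fibre are told apart by one of themselves, and `(a, b)`, `(c, d)` with
`b ≠ d` by `(a₁, f)` for any `f ∈ N[b] \ N[d]`.
-/

theorem SimpleGraph.Reachable.dist_le_one_iff_adj_or_eq {V : Type*} {G : SimpleGraph V} {u v : V}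
    (h : G.Reachable u v) : G.dist u v ≤ 1 ↔ G.Adj u v ∨ u = v := by
  rw [← edist_le_one_iff_adj_or_eq, ← h.coe_dist_eq_edist]
  exact_mod_cast Iff.rfl

theorem IsMetricGen.metricDim_eq {V : Type*} {G : SimpleGraph V} {S : Set V}
    (hS : IsMetricGen G S) (hmin : ∀ T, IsMetricGen G T → S.ncard ≤ T.ncard) :
    metricDim G = S.ncard :=
  le_antisymm (Nat.sInf_le ⟨S, hS, rfl⟩)
    (le_csInf ⟨_, S, hS, rfl⟩ fun _ ⟨T, hT, hTn⟩ => hTn ▸ hmin T hT)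

section StrongProd

variable {α β : Type*} {H : SimpleGraph β}

theorem strongProd_top_adj {x y : α × β} :
    (strongProd ⊤ H).Adj x y ↔ x ≠ y ∧ (x.2 = y.2 ∨ H.Adj x.2 y.2) := by
  refine ⟨fun ⟨hne, _, h⟩ => ⟨hne, h⟩, fun ⟨hne, h⟩ => ⟨hne, ?_, h⟩⟩
  exact (eq_or_ne x.1 y.1).imp_right (top_adj _ _).mpr

def strongProdRight (G : SimpleGraph α) (a : α) : H →g strongProd G H where
  toFun b := (a, b)
  map_rel' h := ⟨fun he => h.ne (congrArg Prod.snd he), Or.inl rfl, Or.inr h⟩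

theorem dist_snd_le_length {G : SimpleGraph α} (hH : H.Preconnected) {x y : α × β}
    (w : (strongProd G H).Walk x y) : H.dist x.2 y.2 ≤ w.length := by
  induction w with
  | nil => simp
  | @cons u v w h p ih =>
    have hstep : H.dist u.2 v.2 ≤ 1 := by
      rcases h.2.2 with heq | hadj
      · simp [heq]
      · exact (dist_eq_one_iff_adj.mpr hadj).le
    calc H.dist u.2 w.2 ≤ H.dist u.2 v.2 + H.dist v.2 w.2 := (hH _ _).dist_triangle_left _
      _ ≤ p.length + 1 := by omega
      _ = (Walk.cons h p).length := (Walk.length_cons h p).symm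

theorem exists_walk_strongProd_top_of_ne (hH : H.Preconnected) {x y : α × β} (hne : x ≠ y) :
    ∃ w : (strongProd ⊤ H).Walk x y, w.length = max 1 (H.dist x.2 y.2) := by
  obtain ⟨a, b⟩ := x
  obtain ⟨c, d⟩ := y
  obtain ⟨p, hp⟩ := (hH b d).exists_walk_length_eq_dist
  cases p with
  | nil => exact ⟨(strongProd_top_adj.mpr ⟨hne, Or.inl rfl⟩).toWalk, by simp⟩
  | @cons _ v _ h p =>
    have hadj : (strongProd ⊤ H).Adj (a, b) (c, v) :=
      strongProd_top_adj.mpr ⟨fun he => h.ne (congrArg Prod.snd he), Or.inr h⟩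
    refine ⟨Walk.cons hadj (p.map (strongProdRight ⊤ c)), ?_⟩
    change (p.map _).length + 1 = _
    rw [Walk.length_map, ← hp, Walk.length_cons]
    omega

theorem dist_strongProd_top_of_ne (hH : H.Preconnected) {x y : α × β} (hne : x ≠ y) :
    (strongProd ⊤ H).dist x y = max 1 (H.dist x.2 y.2) := by
  obtain ⟨w, hw⟩ := exists_walk_strongProd_top_of_ne hH hne
  refine le_antisymm (hw ▸ dist_le w) (max_le (w.reachable.pos_dist_of_ne hne) ?_)
  obtain ⟨w', hw'⟩ := w.reachable.exists_walk_length_eq_dist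
  exact hw' ▸ dist_snd_le_length hH w'

/-- Vertices in the same fibre over `H` are true twins, so a metric generator misses at most one
vertex of each fibre. -/
theorem ncard_compl_le_of_isMetricGen [Finite β] (hH : H.Preconnected) {S : Set (α × β)}
    (hS : IsMetricGen (strongProd ⊤ H) S) : Sᶜ.ncard ≤ Nat.card β := by
  have hinj : Sᶜ.InjOn Prod.snd := by
    intro x hx y hy hxy
    by_contra hne
    obtain ⟨s, hs, hdist⟩ := hS x y hne
    have hxs : x ≠ s := by rintro rfl; exact hx hs
    have hys : y ≠ s := by rintro rfl; exact hy hs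
    rw [dist_strongProd_top_of_ne hH hxs, dist_strongProd_top_of_ne hH hys, hxy] at hdist
    exact hdist rfl
  exact hinj.ncard_image ▸ Set.ncard_le_card _

theorem isMetricGen_strongProd_top [Nontrivial α] (hH : H.Preconnected)
    (hN : ∀ b d, b ≠ d → ¬insert b (H.neighborSet b) ⊆ insert d (H.neighborSet d)) (a₀ : α) :
    IsMetricGen (strongProd ⊤ H) ({a₀}ᶜ ×ˢ Set.univ) := by
  rintro ⟨a, b⟩ ⟨c, d⟩ hne
  by_cases hbd : b = d
  · subst hbd
    have hac : a ≠ c := by rintro rfl; exact hne rfl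
    by_cases ha : a = a₀
    · refine ⟨(c, b), by simp [← ha, hac.symm], ?_⟩
      rw [dist_strongProd_top_of_ne hH hne, dist_self]
      simp
    · refine ⟨(a, b), by simp [ha], ?_⟩
      rw [dist_strongProd_top_of_ne hH hne.symm, dist_self]
      simp
  · obtain ⟨a₁, ha₁⟩ := exists_ne a₀
    obtain ⟨f, hbf, hdf⟩ := Set.not_subset.mp (hN b d hbd)
    rw [Set.mem_insert_iff, mem_neighborSet, eq_comm] at hbf hdf
    refine ⟨(a₁, f), by simp [ha₁], ?_⟩
    have hnear : (strongProd ⊤ H).dist (a, b) (a₁, f) ≤ 1 := by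
      by_cases heq : (a, b) = (a₁, f)
      · simp [heq]
      · rw [dist_strongProd_top_of_ne hH heq]
        exact max_le le_rfl ((hH b f).dist_le_one_iff_adj_or_eq.mpr hbf.symm)
    have hfar : 2 ≤ (strongProd ⊤ H).dist (c, d) (a₁, f) := by
      have hne' : (c, d) ≠ (a₁, f) := fun he => hdf (Or.inl (congrArg Prod.snd he))
      rw [dist_strongProd_top_of_ne hH hne']
      have : ¬H.dist d f ≤ 1 := fun h => hdf ((hH d f).dist_le_one_iff_adj_or_eq.mp h).symm
      exact le_max_of_le_right (not_le.mp this)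
    omega

theorem metricDim_strongProd_top [Finite α] [Nontrivial α] [Finite β] (hH : H.Preconnected)
    (hN : ∀ b d, b ≠ d → ¬insert b (H.neighborSet b) ⊆ insert d (H.neighborSet d)) :
    metricDim (strongProd (⊤ : SimpleGraph α) H) = Nat.card β * (Nat.card α - 1) := by
  obtain ⟨a₀⟩ : Nonempty α := inferInstance
  have hcard :
      (({a₀}ᶜ : Set α) ×ˢ (Set.univ : Set β)).ncard = Nat.card β * (Nat.card α - 1) := by
    rw [Set.ncard_prod, Set.ncard_compl, Set.ncard_singleton, Set.ncard_univ, mul_comm]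
  rw [(isMetricGen_strongProd_top hH hN a₀).metricDim_eq fun T hT => ?_, hcard]
  have hsplit := Set.ncard_add_ncard_compl T
  have hTc := ncard_compl_le_of_isMetricGen hH hT
  rw [Nat.card_prod] at hsplit
  rw [hcard, Nat.mul_sub_one, mul_comm]
  omega

end StrongProd

open Fin.CommRing in
theorem cycleGraph_insert_neighborSet_not_subset {n : ℕ} (hn : 4 ≤ n) {b d : Fin n} (h : b ≠ d) :
    ¬insert b ((cycleGraph n).neighborSet b) ⊆ insert d ((cycleGraph n).neighborSet d) := by
  obtain ⟨m, rfl⟩ : ∃ m, n = m + 4 := ⟨n - 4, by omega⟩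
  intro hsub
  by_cases hbd : (cycleGraph (m + 4)).Adj b d
  · obtain ⟨e, rfl, he⟩ : ∃ e, d = b + e ∧ (e = 1 ∨ e = -1) := by
      refine ⟨d - b, by abel, ?_⟩
      rcases cycleGraph_adj.mp hbd with h | h
      · exact Or.inr (by rw [← h, neg_sub])
      · exact Or.inl h
    -- The other neighbour `b - e` of `b` is at difference `±2` from `d`, and `2, 3 ≠ 0` in `Fin n`.
    have hf := hsub (Set.mem_insert_of_mem _ (show (cycleGraph (m + 4)).Adj b (b - e) from
      cycleGraph_adj.mpr (by rcases he with rfl | rfl <;> simp)))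
    rw [Set.mem_insert_iff, mem_neighborSet, cycleGraph_adj] at hf
    have h2 : (2 : Fin (m + 4)) ≠ 0 := by
      simp [Fin.ext_iff, Nat.mod_eq_of_lt (show 2 < m + 4 by omega)]
    have h3 : (3 : Fin (m + 4)) ≠ 0 := by
      simp [Fin.ext_iff, Nat.mod_eq_of_lt (show 3 < m + 4 by omega)]
    have h1 : (1 : Fin (m + 4)) ≠ 0 := one_ne_zero
    rcases he with rfl | rfl <;> rcases hf with hf | hf | hf
    · exact h2 (by linear_combination -hf)
    · exact h1 (by linear_combination hf)
    · exact h3 (by linear_combination -hf)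
    · exact h2 (by linear_combination hf)
    · exact h3 (by linear_combination -hf)
    · exact h1 (by linear_combination hf)
  · rcases hsub (Set.mem_insert b _) with heq | hadj
    · exact h heq
    · exact hbd hadj.symm

theorem stmt_16 (n1 n2 : ℕ) (hn1 : 2 ≤ n1) (hn2 : 4 ≤ n2) :
    metricDim (strongProd (⊤ : SimpleGraph (Fin n1)) (SimpleGraph.cycleGraph n2)) =
      n2 * (n1 - 1) := by
  have : Nontrivial (Fin n1) := Fin.nontrivial_iff_two_le.mpr hn1
  rw [metricDim_strongProd_top cycleGraph_preconnected
    fun _ _ => cycleGraph_insert_neighborSet_not_subset hn2, Nat.card_fin, Nat.card_fin]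
end

section
/- For any integer n ≥ 2, the metric dimension of the strong product of two paths of order n equals 3: dim(P_n ⊠ P_n) = 3. -/
open SimpleGraph

/-!
The distance in a strong product of connected graphs is the maximum of the distances of the
coordinates, so `P_n ⊠ P_n` is the `n × n` king graph with the Chebyshev metric, and the three
corners `(0, 0)`, `(0, n - 1)`, `(n - 1, 0)` resolve it.

Conversely, if `{u, v}` resolves a graph, the neighbours of `u` have pairwise distinct distances
to `v`, all within one of `d(u, v)`, so `u` has at most three neighbours. In the king graph this
forces `u` and `v` to be corners, and two corners leave unresolved either two vertices on the side
opposite to a common side, or the two remaining corners.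
-/

namespace SimpleGraph

section Distance

variable {V : Type*} {G : SimpleGraph V}

theorem dist_eq_of_forall_adj (d : V → V → ℕ) (hzero : ∀ x, d x x = 0)
    (hadj : ∀ x z y, G.Adj x z → d x y ≤ d z y + 1)
    (hstep : ∀ x y, x ≠ y → ∃ z, G.Adj x z ∧ d z y + 1 = d x y) (x y : V) :
    G.dist x y = d x y := by
  have le_length : ∀ {x} (p : G.Walk x y), d x y ≤ p.length := by
    intro x p
    induction p with
    | nil => simp [hzero]
    | @cons x z w h p ih => have := hadj x z w h; rw [Walk.length_cons]; omega
  have exists_walk : ∀ k x, d x y = k → ∃ p : G.Walk x y, p.length = k := by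
    intro k
    induction k with
    | zero =>
      intro x hx
      by_cases hxy : x = y
      · subst hxy; exact ⟨.nil, rfl⟩
      · obtain ⟨z, -, hz⟩ := hstep x y hxy; omega
    | succ k ih =>
      intro x hx
      have hxy : x ≠ y := by rintro rfl; rw [hzero] at hx; omega
      obtain ⟨z, hxz, hz⟩ := hstep x y hxy
      obtain ⟨p, hp⟩ := ih z (by omega)
      exact ⟨.cons hxz p, by rw [Walk.length_cons, hp]⟩
  obtain ⟨p, hp⟩ := exists_walk _ x rfl
  obtain ⟨q, hq⟩ := p.reachable.exists_walk_length_eq_dist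
  exact le_antisymm (hp ▸ dist_le p) (hq ▸ le_length q)

theorem dist_le_dist_add_one_of_eq_or_adj {x z : V} (h : x = z ∨ G.Adj x z) (y : V) :
    G.dist x y ≤ G.dist z y + 1 := by
  rcases h with rfl | h
  · omega
  · have := h.diff_dist_adj (u := y)
    rw [dist_comm (u := x), dist_comm (u := z)]
    omega

theorem Connected.exists_adj_dist_add_one_eq (hG : G.Connected) {x y : V} (h : x ≠ y) :
    ∃ z, G.Adj x z ∧ G.dist z y + 1 = G.dist x y := by
  obtain ⟨p, hp⟩ := hG.exists_walk_length_eq_dist x y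
  cases p with
  | nil => exact absurd rfl h
  | cons hxz q =>
    refine ⟨_, hxz, le_antisymm ?_ (dist_le_dist_add_one_of_eq_or_adj (.inr hxz) y)⟩
    rw [← hp, Walk.length_cons]
    exact Nat.succ_le_succ (dist_le q)

theorem Connected.exists_eq_or_adj_dist_eq_sub_one (hG : G.Connected) (x y : V) :
    ∃ z, (x = z ∨ G.Adj x z) ∧ G.dist z y = G.dist x y - 1 ∧ (x = z → x = y) := by
  by_cases hxy : x = y
  · subst hxy; exact ⟨x, .inl rfl, by simp, fun _ => rfl⟩
  · obtain ⟨z, hxz, hz⟩ := hG.exists_adj_dist_add_one_eq hxy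
    exact ⟨z, .inr hxz, by omega, fun h => absurd h hxz.ne⟩

end Distance

section StrongProduct

variable {α β : Type*} {G : SimpleGraph α} {H : SimpleGraph β}

theorem strongProd_dist (hG : G.Connected) (hH : H.Connected) (x y : α × β) :
    (strongProd G H).dist x y = max (G.dist x.1 y.1) (H.dist x.2 y.2) := by
  refine dist_eq_of_forall_adj (fun x y => max (G.dist x.1 y.1) (H.dist x.2 y.2))
    (fun x => by simp) ?_ ?_ x y
  · rintro x z y ⟨-, h₁, h₂⟩
    have := dist_le_dist_add_one_of_eq_or_adj h₁ y.1
    have := dist_le_dist_add_one_of_eq_or_adj h₂ y.2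
    omega
  · intro x y hxy
    obtain ⟨z₁, h₁, hd₁, he₁⟩ := hG.exists_eq_or_adj_dist_eq_sub_one x.1 y.1
    obtain ⟨z₂, h₂, hd₂, he₂⟩ := hH.exists_eq_or_adj_dist_eq_sub_one x.2 y.2
    have hxz : x ≠ (z₁, z₂) := fun h => hxy (Prod.ext (he₁ (congrArg Prod.fst h))
      (he₂ (congrArg Prod.snd h)))
    have hpos : G.dist x.1 y.1 ≠ 0 ∨ H.dist x.2 y.2 ≠ 0 := by
      by_contra! h
      exact hxy (Prod.ext (hG.dist_eq_zero_iff.mp h.1) (hH.dist_eq_zero_iff.mp h.2))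
    refine ⟨(z₁, z₂), ⟨hxz, h₁, h₂⟩, ?_⟩
    simp only [hd₁, hd₂]
    omega

theorem strongProd_closedNeighborSet (x : α × β) :
    insert x ((strongProd G H).neighborSet x) =
      insert x.1 (G.neighborSet x.1) ×ˢ insert x.2 (H.neighborSet x.2) := by
  ext ⟨a, b⟩
  simp only [Set.mem_insert_iff, mem_neighborSet, Set.mem_prod, strongProd]
  grind

end StrongProduct

section PathGraph

variable {n : ℕ}

theorem pathGraph_dist (i j : Fin n) : (pathGraph n).dist i j = Nat.dist i j := by
  refine dist_eq_of_forall_adj (fun i j : Fin n => Nat.dist i j) (fun i => Nat.dist_self _)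
    ?_ ?_ i j
  · intro x z y h
    rw [pathGraph_adj] at h
    simp only [Nat.dist]
    omega
  · intro x y hxy
    have hxy' : (x : ℕ) ≠ y := Fin.val_ne_of_ne hxy
    rcases lt_or_gt_of_ne hxy' with h | h
    · exact ⟨⟨x + 1, by omega⟩, pathGraph_adj.mpr (.inl rfl), by simp only [Nat.dist]; omega⟩
    · exact ⟨⟨x - 1, by omega⟩, pathGraph_adj.mpr (.inr (by simp only; omega)),
        by simp only [Nat.dist]; omega⟩

theorem two_le_ncard_closedNeighborSet_pathGraph (hn : 2 ≤ n) (i : Fin n) :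
    2 ≤ (insert i ((pathGraph n).neighborSet i)).ncard := by
  rw [Nat.succ_le_iff, Set.one_lt_ncard_iff]
  by_cases hi : (i : ℕ) + 1 < n
  · refine ⟨i, ⟨i + 1, hi⟩, .inl rfl, .inr (pathGraph_adj.mpr (.inl rfl)), ?_⟩
    simp [Fin.ext_iff]
  · refine ⟨i, ⟨i - 1, by omega⟩, .inl rfl,
      .inr (pathGraph_adj.mpr (.inr (by simp only; omega))), ?_⟩
    simp only [ne_eq, Fin.ext_iff]
    omega

theorem three_le_ncard_closedNeighborSet_pathGraph {i : Fin n} (h₀ : 0 < (i : ℕ))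
    (h₁ : (i : ℕ) + 1 < n) : 3 ≤ (insert i ((pathGraph n).neighborSet i)).ncard := by
  rw [Nat.succ_le_iff, Set.two_lt_ncard_iff]
  refine ⟨i, ⟨i - 1, by omega⟩, ⟨i + 1, h₁⟩, .inl rfl,
    .inr (pathGraph_adj.mpr (.inr (by simp only; omega))), .inr (pathGraph_adj.mpr (.inl rfl)),
    ?_, ?_, ?_⟩ <;> simp only [ne_eq, Fin.ext_iff] <;> omega

end PathGraph

end SimpleGraph

theorem Set.exists_subset_pair_of_ncard_le_two {α : Type*} [Nonempty α] {s : Set α}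
    (hs : s.Finite) (h : s.ncard ≤ 2) : ∃ u v, s ⊆ {u, v} := by
  obtain h | h | h : s.ncard = 0 ∨ s.ncard = 1 ∨ s.ncard = 2 := by omega
  · obtain ⟨u⟩ := ‹Nonempty α›
    exact ⟨u, u, by simp [(Set.ncard_eq_zero hs).mp h]⟩
  · obtain ⟨u, rfl⟩ := Set.ncard_eq_one.mp h
    exact ⟨u, u, by simp⟩
  · obtain ⟨u, v, -, rfl⟩ := Set.ncard_eq_two.mp h
    exact ⟨u, v, subset_rfl⟩

namespace IsMetricGen

variable {V : Type*} {G : SimpleGraph V} {S : Set V} {u v : V}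

theorem dist_ne_or_dist_ne (hS : IsMetricGen G S) (hsub : S ⊆ {u, v}) {x y : V} (hxy : x ≠ y) :
    G.dist x u ≠ G.dist y u ∨ G.dist x v ≠ G.dist y v := by
  obtain ⟨s, hs, hne⟩ := hS x y hxy
  rcases hsub hs with rfl | rfl
  · exact .inl hne
  · exact .inr hne

theorem ncard_neighborSet_le_three (hS : IsMetricGen G S) (hsub : S ⊆ {u, v}) :
    (G.neighborSet u).ncard ≤ 3 := by
  have hwindow : ∀ w ∈ G.neighborSet u,
      G.dist w v ∈ Set.Icc (G.dist u v - 1) (G.dist u v + 1) := by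
    intro w hw
    have := (G.adj_symm hw).diff_dist_adj (u := v)
    rw [G.dist_comm (u := v), G.dist_comm (u := v)] at this
    constructor <;> omega
  have hinj : Set.InjOn (G.dist · v) (G.neighborSet u) := by
    intro w hw w' hw' hd
    by_contra hne
    have hw1 := G.dist_eq_one_iff_adj.mpr (G.adj_symm hw)
    have hw'1 := G.dist_eq_one_iff_adj.mpr (G.adj_symm hw')
    rcases hS.dist_ne_or_dist_ne hsub hne with h | h
    · exact h (hw1.trans hw'1.symm)
    · exact h hd
  calc (G.neighborSet u).ncard ≤ (Set.Icc (G.dist u v - 1) (G.dist u v + 1)).ncard :=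
        Set.ncard_le_ncard_of_injOn _ hwindow hinj
    _ ≤ 3 := by rw [Set.ncard_Icc_nat]; omega

end IsMetricGen

theorem metricDim_eq_of_forall_le {α : Type*} {G : SimpleGraph α} {k : ℕ}
    (hex : ∃ S : Set α, IsMetricGen G S ∧ S.ncard = k)
    (hle : ∀ S : Set α, IsMetricGen G S → k ≤ S.ncard) : metricDim G = k :=
  le_antisymm (Nat.sInf_le hex) (le_csInf ⟨k, hex⟩ (by rintro _ ⟨S, hS, rfl⟩; exact hle S hS))

abbrev kingGraph (n : ℕ) : SimpleGraph (Fin n × Fin n) :=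
  strongProd (pathGraph n) (pathGraph n)

namespace kingGraph

variable {n : ℕ}

theorem dist_eq (hn : n ≠ 0) (x y : Fin n × Fin n) :
    (kingGraph n).dist x y = max (Nat.dist x.1 y.1) (Nat.dist x.2 y.2) := by
  obtain ⟨m, rfl⟩ := Nat.exists_eq_succ_of_ne_zero hn
  rw [strongProd_dist (pathGraph_connected m) (pathGraph_connected m), pathGraph_dist,
    pathGraph_dist]

def IsCorner (u : Fin n × Fin n) : Prop :=
  ((u.1 : ℕ) = 0 ∨ (u.1 : ℕ) = n - 1) ∧ ((u.2 : ℕ) = 0 ∨ (u.2 : ℕ) = n - 1)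

theorem three_lt_ncard_neighborSet (hn : 2 ≤ n) {u : Fin n × Fin n} (hu : ¬ IsCorner u) :
    3 < ((kingGraph n).neighborSet u).ncard := by
  have hprod := congrArg Set.ncard (strongProd_closedNeighborSet (G := pathGraph n)
    (H := pathGraph n) u)
  rw [Set.ncard_insert_of_notMem ((kingGraph n).notMem_neighborSet_self), Set.ncard_prod] at hprod
  have h₁ := two_le_ncard_closedNeighborSet_pathGraph hn u.1
  have h₂ := two_le_ncard_closedNeighborSet_pathGraph hn u.2
  have hint : (0 < (u.1 : ℕ) ∧ (u.1 : ℕ) + 1 < n) ∨ (0 < (u.2 : ℕ) ∧ (u.2 : ℕ) + 1 < n) := by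
    simp only [IsCorner] at hu
    omega
  rcases hint with ⟨hlo, hhi⟩ | ⟨hlo, hhi⟩
  · have := Nat.mul_le_mul (three_le_ncard_closedNeighborSet_pathGraph hlo hhi) h₂
    omega
  · have := Nat.mul_le_mul h₁ (three_le_ncard_closedNeighborSet_pathGraph hlo hhi)
    omega

theorem IsCorner.of_isMetricGen (hn : 2 ≤ n) {S : Set (Fin n × Fin n)} {u v : Fin n × Fin n}
    (hS : IsMetricGen (kingGraph n) S) (hsub : S ⊆ {u, v}) : IsCorner u := by
  by_contra hu
  have := hS.ncard_neighborSet_le_three hsub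
  have := three_lt_ncard_neighborSet hn hu
  omega

theorem exists_ne_of_isCorner (hn : 2 ≤ n) {u v : Fin n × Fin n} (hu : IsCorner u)
    (hv : IsCorner v) : ∃ x y, x ≠ y ∧ (kingGraph n).dist x u = (kingGraph n).dist y u ∧
      (kingGraph n).dist x v = (kingGraph n).dist y v := by
  simp only [IsCorner] at hu hv
  simp only [dist_eq (by omega : n ≠ 0), Nat.dist, ne_eq, Prod.ext_iff, Fin.ext_iff]
  by_cases h₁ : (u.1 : ℕ) = v.1
  · exact ⟨(⟨n - 1 - u.1, by omega⟩, ⟨0, by omega⟩), (⟨n - 1 - u.1, by omega⟩, ⟨1, by omega⟩),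
      by simp only; omega⟩
  by_cases h₂ : (u.2 : ℕ) = v.2
  · exact ⟨(⟨0, by omega⟩, ⟨n - 1 - u.2, by omega⟩), (⟨1, by omega⟩, ⟨n - 1 - u.2, by omega⟩),
      by simp only; omega⟩
  · exact ⟨(u.1, v.2), (v.1, u.2), by simp only; omega⟩

theorem three_le_ncard_of_isMetricGen (hn : 2 ≤ n) {S : Set (Fin n × Fin n)}
    (hS : IsMetricGen (kingGraph n) S) : 3 ≤ S.ncard := by
  by_contra! hlt
  have : Nonempty (Fin n × Fin n) := ⟨(⟨0, by omega⟩, ⟨0, by omega⟩)⟩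
  obtain ⟨u, v, hsub⟩ := Set.exists_subset_pair_of_ncard_le_two S.toFinite (by omega)
  have hu := IsCorner.of_isMetricGen hn hS hsub
  have hv := IsCorner.of_isMetricGen hn hS (Set.pair_comm u v ▸ hsub)
  obtain ⟨x, y, hxy, hdu, hdv⟩ := exists_ne_of_isCorner hn hu hv
  rcases hS.dist_ne_or_dist_ne hsub hxy with h | h
  · exact h hdu
  · exact h hdv

theorem exists_isMetricGen_ncard_eq_three (hn : 2 ≤ n) :
    ∃ S : Set (Fin n × Fin n), IsMetricGen (kingGraph n) S ∧ S.ncard = 3 := by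
  let a : Fin n := ⟨0, by omega⟩
  let b : Fin n := ⟨n - 1, by omega⟩
  have hab : a ≠ b := by simp only [a, b, ne_eq, Fin.ext_iff]; omega
  refine ⟨{(a, a), (a, b), (b, a)}, ?_, Set.ncard_eq_three.mpr ⟨_, _, _, ?_, ?_, ?_, rfl⟩⟩
  · intro x y hxy
    by_contra! h
    have h₁ := h _ (.inl rfl)
    have h₂ := h _ (.inr (.inl rfl))
    have h₃ := h _ (.inr (.inr rfl))
    have hlast : ∀ i : Fin n, Nat.dist i (n - 1) = n - 1 - i :=
      fun i => Nat.dist_eq_sub_of_le (Nat.le_sub_one_of_lt i.isLt)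
    simp only [dist_eq (by omega : n ≠ 0), a, b, Nat.dist_zero_right, hlast] at h₁ h₂ h₃
    exact hxy (Prod.ext (Fin.ext (by omega)) (Fin.ext (by omega)))
  all_goals simp [hab, hab.symm]

end kingGraph

theorem stmt_18 (n : ℕ) (hn : 2 ≤ n) :
    metricDim (strongProd (SimpleGraph.pathGraph n) (SimpleGraph.pathGraph n)) = 3 :=
  metricDim_eq_of_forall_le (kingGraph.exists_isMetricGen_ncard_eq_three hn)
    fun _ hS => kingGraph.three_le_ncard_of_isMetricGen hn hS
end

section
/- Let C be a cycle graph and x, y, u, v vertices of C with x adjacent to y. If d_C(u,x) = d_C(v,x) and u ≠ v, then d_C(u,y) ≠ d_C(v,y). -/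
open SimpleGraph

/-! Identify the vertices of `cycleGraph n` with `ZMod n`. The distance from `a` to `b` is then
`|b - a|`, where `|c| = c.valMinAbs.natAbs`: as a function of `a` it vanishes only at `b`, changes
by at most one along an edge, and drops along some edge at every other vertex. Since `|c| = |d|`
iff `c = ±d`, distinct vertices `u, v` equidistant from `x` are mirror images, `u + v = 2x`. Were
they also equidistant from `y`, then `2x = 2y`; but `y - x = ±1`, and `2 ≠ 0` in `ZMod n` for
`n ≥ 3`. -/

namespace SimpleGraph

variable {V : Type*} {G : SimpleGraph V}

theorem Walk.apply_le_apply_add_length (f : V → ℕ) (hf : ∀ a b, G.Adj a b → f a ≤ f b + 1)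
    {a b : V} (p : G.Walk a b) : f a ≤ f b + p.length := by
  induction p with
  | nil => simp
  | cons h _ ih => rw [Walk.length_cons]; have := hf _ _ h; omega

theorem exists_walk_length_le_of_exists_adj_lt (f : V → ℕ) {v : V}
    (hdesc : ∀ a, a ≠ v → ∃ b, G.Adj a b ∧ f b < f a) (a : V) :
    ∃ p : G.Walk a v, p.length ≤ f a := by
  induction hfa : f a using Nat.strong_induction_on generalizing a with
  | _ k ih =>
    by_cases hav : a = v
    · subst hav
      exact ⟨.nil, Nat.zero_le _⟩
    obtain ⟨b, hab, hlt⟩ := hdesc a hav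
    obtain ⟨p, hp⟩ := ih (f b) (hfa ▸ hlt) b rfl
    exact ⟨.cons hab p, by rw [Walk.length_cons]; omega⟩

theorem dist_eq_of_forall_adj_s19 (f : V → ℕ) {v : V} (hv : f v = 0)
    (hlip : ∀ a b, G.Adj a b → f a ≤ f b + 1)
    (hdesc : ∀ a, a ≠ v → ∃ b, G.Adj a b ∧ f b < f a) (a : V) : G.dist a v = f a := by
  obtain ⟨p, hp⟩ := exists_walk_length_le_of_exists_adj_lt f hdesc a
  obtain ⟨q, hq⟩ := p.reachable.exists_walk_length_eq_dist
  have := q.apply_le_apply_add_length f hlip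
  exact le_antisymm ((dist_le p).trans hp) (by omega)

end SimpleGraph

namespace ZMod

variable {n : ℕ}

theorem natAbs_valMinAbs_one_le : (1 : ZMod n).valMinAbs.natAbs ≤ 1 := by
  rcases eq_zero_or_neZero n with rfl | _
  · rfl
  rw [valMinAbs_natAbs_eq_min, val_one_eq_one_mod]
  exact (min_le_left _ _).trans (Nat.mod_le _ _)

theorem exists_natAbs_valMinAbs_sub_lt [NeZero n] {c : ZMod n} (hc : c ≠ 0) :
    ∃ e : ZMod n, (e = 1 ∨ e = -1) ∧ (c - e).valMinAbs.natAbs < c.valMinAbs.natAbs := by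
  have hz : c.valMinAbs ≠ 0 := (valMinAbs_eq_zero c).not.2 hc
  have hmem := c.valMinAbs_mem_Ioc
  rcases hz.lt_or_gt with hneg | hpos
  · refine ⟨-1, .inr rfl, ?_⟩
    have : (c - -1).valMinAbs = c.valMinAbs + 1 := by
      rw [valMinAbs_spec]
      refine ⟨by push_cast; ring, ?_, ?_⟩ <;> linarith [hmem.1, hmem.2]
    rw [this]; omega
  · refine ⟨1, .inl rfl, ?_⟩
    have : (c - 1).valMinAbs = c.valMinAbs - 1 := by
      rw [valMinAbs_spec]
      refine ⟨by push_cast; ring, ?_, ?_⟩ <;> linarith [hmem.1, hmem.2]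
    rw [this]; omega

end ZMod

namespace Fin

variable {n : ℕ}

theorem natCast_val_sub (a b : Fin n) : (((a - b : Fin n) : ℕ) : ZMod n) = a - b := by
  rw [Fin.val_sub, ZMod.natCast_mod, Nat.cast_add, Nat.cast_sub b.is_le', ZMod.natCast_self,
    zero_sub, neg_add_eq_sub]

theorem natCast_injective : Function.Injective ((↑) : Fin n → ZMod n) := by
  intro a b h
  simpa only [ZMod.val_cast_of_lt a.is_lt, ZMod.val_cast_of_lt b.is_lt, Fin.val_inj] using
    congrArg ZMod.val h

end Fin

namespace SimpleGraph

variable {n : ℕ}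

theorem cycleGraph_adj_iff_zmod (hn : 2 ≤ n) {a b : Fin n} :
    (cycleGraph n).Adj a b ↔ (a : ZMod n) - b = 1 ∨ (b : ZMod n) - a = 1 := by
  have val_eq_one_iff (c : Fin n) : c.val = 1 ↔ (c : ZMod n) = 1 := by
    refine ⟨fun h => by rw [h, Nat.cast_one], fun h => ?_⟩
    rw [← ZMod.val_cast_of_lt c.is_lt, h, ZMod.val_one'' (by omega)]
  rw [cycleGraph_adj', val_eq_one_iff, val_eq_one_iff, Fin.natCast_val_sub, Fin.natCast_val_sub]

theorem cycleGraph_dist (hn : 2 ≤ n) (a b : Fin n) :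
    (cycleGraph n).dist a b = ((b : ZMod n) - a).valMinAbs.natAbs := by
  have : NeZero n := ⟨by omega⟩
  refine dist_eq_of_forall_adj_s19 (v := b) (fun c : Fin n => ((b : ZMod n) - c).valMinAbs.natAbs)
    (by simp) ?_ ?_ a
  · intro c d hcd
    have hstep : ((d : ZMod n) - c).valMinAbs.natAbs ≤ 1 := by
      rcases (cycleGraph_adj_iff_zmod hn).1 hcd with h | h
      · rw [← neg_sub, h, ZMod.natAbs_valMinAbs_neg]
        exact ZMod.natAbs_valMinAbs_one_le
      · rw [h]
        exact ZMod.natAbs_valMinAbs_one_le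
    calc ((b : ZMod n) - c).valMinAbs.natAbs
        = (((b : ZMod n) - d) + ((d : ZMod n) - c)).valMinAbs.natAbs := by rw [sub_add_sub_cancel]
      _ ≤ (((b : ZMod n) - d).valMinAbs + ((d : ZMod n) - c).valMinAbs).natAbs :=
        ZMod.natAbs_valMinAbs_add_le _ _
      _ ≤ ((b : ZMod n) - d).valMinAbs.natAbs + 1 := (Int.natAbs_add_le _ _).trans (by omega)
  · intro c hcb
    have hne : (b : ZMod n) - c ≠ 0 := sub_ne_zero.2 fun h => hcb (Fin.natCast_injective h).symm
    obtain ⟨e, he, hlt⟩ := ZMod.exists_natAbs_valMinAbs_sub_lt hne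
    refine ⟨⟨((c : ZMod n) + e).val, ZMod.val_lt _⟩, (cycleGraph_adj_iff_zmod hn).2 ?_, ?_⟩
    · simp only [ZMod.natCast_zmod_val]
      rcases he with rfl | rfl
      · exact .inr (add_sub_cancel_left _ _)
      · exact .inl (by ring)
    · simpa only [ZMod.natCast_zmod_val, sub_add_eq_sub_sub] using hlt

theorem cycleGraph_dist_eq_dist_iff (hn : 2 ≤ n) {a b c : Fin n} :
    (cycleGraph n).dist a c = (cycleGraph n).dist b c ↔ a = b ∨ (a : ZMod n) + b = 2 * c := by
  rw [cycleGraph_dist hn, cycleGraph_dist hn, ZMod.natAbs_valMinAbs_eq_natAbs_valMinAbs,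
    ← Fin.natCast_injective.eq_iff, sub_right_inj]
  exact or_congr_right ⟨fun h => by linear_combination -h, fun h => by linear_combination -h⟩

end SimpleGraph

theorem stmt_19 (n : ℕ) (hn : 3 ≤ n) (x y u v : Fin n)
    (hxy : (SimpleGraph.cycleGraph n).Adj x y) (huv : u ≠ v)
    (h : (SimpleGraph.cycleGraph n).dist u x = (SimpleGraph.cycleGraph n).dist v x) :
    (SimpleGraph.cycleGraph n).dist u y ≠ (SimpleGraph.cycleGraph n).dist v y := by
  have hn2 : 2 ≤ n := by omega
  intro h'
  have hx := ((cycleGraph_dist_eq_dist_iff hn2).1 h).resolve_left huv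
  have hy := ((cycleGraph_dist_eq_dist_iff hn2).1 h').resolve_left huv
  have htwo : ((2 : ℕ) : ZMod n) = 0 := by
    rcases (cycleGraph_adj_iff_zmod hn2).1 hxy with hxy | hxy
    · push_cast; linear_combination (-2) * hxy - hx + hy
    · push_cast; linear_combination (-2) * hxy + hx - hy
  have := Nat.le_of_dvd two_pos ((ZMod.natCast_eq_zero_iff 2 n).1 htwo)
  omega
end
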